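/- arXiv:math/0105022 — 3 statements merged into one kernel-verified Lean document; each statement's English description precedes it below -/
import Mathlib

section
/- Fix k ≥ 4 and write k = 2i + r with r ∈ {0,1}, i ≥ 2. For every N ≥ 1, the number Φ_k(N) of natural numbers n ≤ N that are k-palindromic in some base b ≥ 2 satisfies Φ_k(N) ≤ 4·(N+1)^{(i+r+1)/k}. -/
def IsKPalin (b k n : ℕ) : Prop :=
  2 ≤ b ∧ (Nat.digits b n).length = k ∧ (Nat.digits b n).Palindrome

/-!
A `k`-palindrome `n` in base `b`, with `k = 2i + r`, is determined by `b` and its upper part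
`n / b^i`, a number of `i + r` digits: the lower `i` digits are the mirror image of the upper ones.
So base `b` contributes at most `min (N / b^i) (b^(i+r))` palindromes up to `N`. With
`B = (N+1)^(1/k)`, the bases `b ≤ B` contribute at most `B · B^(i+r)` in total, and the bases
`b > B` at most `(N+1) B^(2-i) ∑_{b > B} b⁻²  ≤ 2 (N+1) / B^(i-1) = 2 B^(i+r+1)`.
-/

open Finset

namespace Nat

theorem digits_div_pow {b : ℕ} (hb : 1 < b) (n i : ℕ) :
    digits b (n / b ^ i) = (digits b n).drop i := by
  rw [self_div_pow_eq_ofDigits_drop i n hb]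
  refine digits_ofDigits b hb _ (fun d hd => digits_lt_base hb (List.mem_of_mem_drop hd)) ?_
  intro hne
  rw [List.getLast_drop]
  exact getLast_digit_ne_zero b (digits_ne_nil_iff_ne_zero.mp (List.ne_nil_of_drop_ne_nil hne))

end Nat

def palindromeOfUpperDigits (b r m : ℕ) : ℕ :=
  Nat.ofDigits b (((Nat.digits b m).drop r).reverse ++ Nat.digits b m)

namespace IsKPalin

variable {b k i r n : ℕ}

theorem digits_eq (h : IsKPalin b k n) (hk : k = 2 * i + r) :
    Nat.digits b n = ((Nat.digits b (n / b ^ i)).drop r).reverse ++ Nat.digits b (n / b ^ i) := by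
  obtain ⟨hb, hlen, hpal⟩ := h
  have htake : (Nat.digits b n).take i = (((Nat.digits b n).drop i).drop r).reverse := by
    rw [List.drop_drop, List.reverse_drop, hpal.reverse_eq, hlen]
    congr 1
    omega
  rw [Nat.digits_div_pow hb, ← htake, List.take_append_drop]

theorem palindromeOfUpperDigits_eq (h : IsKPalin b k n) (hk : k = 2 * i + r) :
    palindromeOfUpperDigits b r (n / b ^ i) = n := by
  rw [palindromeOfUpperDigits, ← h.digits_eq hk, Nat.ofDigits_digits]

theorem length_digits_div_pow (h : IsKPalin b k n) (hk : k = 2 * i + r) :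
    (Nat.digits b (n / b ^ i)).length = i + r := by
  rw [Nat.digits_div_pow h.1, List.length_drop, h.2.1]
  omega

theorem div_pow_mem_Icc {N : ℕ} (h : IsKPalin b k n) (hk : k = 2 * i + r) (hi : 0 < i)
    (hn : n ≤ N) : n / b ^ i ∈ Icc 1 (min (N / b ^ i) (b ^ (i + r))) := by
  have hlen := h.length_digits_div_pow hk
  have hpos : n / b ^ i ≠ 0 := by
    intro h0
    rw [h0, Nat.digits_zero, List.length_nil] at hlen
    omega
  have hlt : n / b ^ i < b ^ (i + r) := hlen ▸ Nat.lt_base_pow_length_digits h.1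
  have hle : n / b ^ i ≤ N / b ^ i := Nat.div_le_div_right hn
  exact mem_Icc.mpr ⟨Nat.one_le_iff_ne_zero.mpr hpos, le_min hle hlt.le⟩

end IsKPalin

theorem setOf_isKPalin_subset {k i r : ℕ} (N : ℕ) (hk : k = 2 * i + r) (hi : 0 < i) :
    {n : ℕ | n ≤ N ∧ ∃ b : ℕ, IsKPalin b k n} ⊆
      ↑((Icc 2 N).biUnion fun b =>
        (Icc 1 (min (N / b ^ i) (b ^ (i + r)))).image (palindromeOfUpperDigits b r)) := by
  rintro n ⟨hn, b, hpal⟩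
  have hmem := hpal.div_pow_mem_Icc hk hi hn
  have hbN : b ≤ N := by
    obtain ⟨hone, hmin⟩ := mem_Icc.mp hmem
    have hdiv : 1 ≤ N / b ^ i := hone.trans (hmin.trans (min_le_left _ _))
    rw [Nat.le_div_iff_mul_le (pow_pos (by linarith [hpal.1]) i), one_mul] at hdiv
    exact (Nat.le_self_pow hi.ne' b).trans hdiv
  simp only [coe_biUnion, Set.mem_iUnion, coe_image, Set.mem_image, mem_coe]
  exact ⟨b, mem_Icc.mpr ⟨hpal.1, hbN⟩, n / b ^ i, hmem, hpal.palindromeOfUpperDigits_eq hk⟩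

theorem ncard_setOf_isKPalin_le {k i r : ℕ} (N : ℕ) (hk : k = 2 * i + r) (hi : 0 < i) :
    {n : ℕ | n ≤ N ∧ ∃ b : ℕ, IsKPalin b k n}.ncard ≤
      ∑ b ∈ Icc 2 N, min (N / b ^ i) (b ^ (i + r)) := by
  refine (Set.ncard_le_ncard (setOf_isKPalin_subset N hk hi) (finite_toSet _)).trans ?_
  rw [Set.ncard_coe_finset]
  refine card_biUnion_le.trans (sum_le_sum fun b _ => card_image_le.trans ?_)
  rw [Nat.card_Icc, Nat.add_sub_cancel]

theorem sum_Icc_le_of_le_pow_of_le_div_pow {f : ℕ → ℝ} {s i : ℕ} {B C : ℝ} (N : ℕ)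
    (hi : 2 ≤ i) (hB : 0 < B) (hC : 0 ≤ C) (hf_pow : ∀ b, f b ≤ (b : ℝ) ^ s)
    (hf_div : ∀ b, f b ≤ C / (b : ℝ) ^ i) :
    ∑ b ∈ Icc 2 N, f b ≤ B ^ (s + 1) + 2 * C / B ^ (i - 1) := by
  set M := ⌊B⌋₊
  rw [← sum_filter_add_sum_filter_not (Icc 2 N) (· ≤ M)]
  gcongr
  · have hcard : (((Icc 2 N).filter (· ≤ M)).card : ℝ) ≤ B := by
      calc (((Icc 2 N).filter (· ≤ M)).card : ℝ) ≤ (Icc 1 M).card := by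
            gcongr
            intro b hb
            simp only [mem_filter, mem_Icc] at hb ⊢
            omega
        _ = M := by simp
        _ ≤ B := Nat.floor_le hB.le
    calc ∑ b ∈ (Icc 2 N).filter (· ≤ M), f b ≤ ∑ b ∈ (Icc 2 N).filter (· ≤ M), B ^ s := by
          refine sum_le_sum fun b hb => (hf_pow b).trans ?_
          gcongr
          exact (Nat.le_floor_iff hB.le).mp (mem_filter.mp hb).2
      _ = ((Icc 2 N).filter (· ≤ M)).card * B ^ s := by rw [sum_const, nsmul_eq_mul]
      _ ≤ B * B ^ s := by gcongr
      _ = B ^ (s + 1) := (pow_succ' B s).symm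
  · have hterm : ∀ b : ℕ, B < b → f b ≤ C / B ^ (i - 2) * ((b : ℝ) ^ 2)⁻¹ := by
      intro b hBb
      have hb : (0 : ℝ) < b := hB.trans hBb
      calc f b ≤ C / (b : ℝ) ^ i := hf_div b
        _ = C / ((b : ℝ) ^ (i - 2) * (b : ℝ) ^ 2) := by rw [← pow_add, Nat.sub_add_cancel hi]
        _ ≤ C / (B ^ (i - 2) * (b : ℝ) ^ 2) := by gcongr
        _ = C / B ^ (i - 2) * ((b : ℝ) ^ 2)⁻¹ := by rw [div_mul_eq_div_div, div_eq_mul_inv]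
    calc ∑ b ∈ (Icc 2 N).filter (¬ · ≤ M), f b
        ≤ ∑ b ∈ (Icc 2 N).filter (¬ · ≤ M), C / B ^ (i - 2) * ((b : ℝ) ^ 2)⁻¹ := by
          refine sum_le_sum fun b hb => hterm b ?_
          exact (Nat.floor_lt hB.le).mp (not_le.mp (mem_filter.mp hb).2)
      _ ≤ ∑ b ∈ Ioo M (N + 1), C / B ^ (i - 2) * ((b : ℝ) ^ 2)⁻¹ := by
          refine sum_le_sum_of_subset_of_nonneg ?_ fun _ _ _ => by positivity
          intro b hb
          simp only [mem_filter, mem_Icc, mem_Ioo] at hb ⊢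
          omega
      _ = C / B ^ (i - 2) * ∑ b ∈ Ioo M (N + 1), ((b : ℝ) ^ 2)⁻¹ := (mul_sum _ _ _).symm
      _ ≤ C / B ^ (i - 2) * (2 / (M + 1)) := by gcongr; exact sum_Ioo_inv_sq_le M (N + 1)
      _ ≤ C / B ^ (i - 2) * (2 / B) := by gcongr; exact (Nat.lt_floor_add_one B).le
      _ = 2 * C / B ^ (i - 1) := by
          rw [show i - 1 = i - 2 + 1 by omega, pow_succ]
          field_simp

theorem stmt_6_general (k i r N : ℕ) (hi : 2 ≤ i)
    (hkir : k = 2 * i + r) :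
    ({n : ℕ | n ≤ N ∧ ∃ b : ℕ, IsKPalin b k n}.ncard : ℝ) ≤
      4 * ((N : ℝ) + 1) ^ (((i : ℝ) + r + 1) / k) := by
  have hx : (0 : ℝ) < N + 1 := by positivity
  obtain ⟨B, hB, hBk⟩ : ∃ B : ℝ, 0 < B ∧ B = ((N : ℝ) + 1) ^ (1 / k : ℝ) :=
    ⟨_, Real.rpow_pos_of_pos hx _, rfl⟩
  have hk : (k : ℝ) ≠ 0 := by norm_cast; omega
  have hupper : B ^ (i + r + 1) = ((N : ℝ) + 1) ^ (((i : ℝ) + r + 1) / k) := by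
    rw [hBk, ← Real.rpow_natCast, ← Real.rpow_mul hx.le]
    push_cast
    ring_nf
  have hlower : ((N : ℝ) + 1) / B ^ (i - 1) = B ^ (i + r + 1) := by
    rw [div_eq_iff (pow_pos hB _).ne', ← pow_add, show i + r + 1 + (i - 1) = k by omega, hBk,
      ← Real.rpow_natCast, ← Real.rpow_mul hx.le, one_div_mul_cancel hk, Real.rpow_one]
  calc ({n : ℕ | n ≤ N ∧ ∃ b : ℕ, IsKPalin b k n}.ncard : ℝ)
      ≤ ∑ b ∈ Icc 2 N, ((min (N / b ^ i) (b ^ (i + r)) : ℕ) : ℝ) := by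
        exact_mod_cast ncard_setOf_isKPalin_le N hkir (by omega)
    _ ≤ B ^ (i + r + 1) + 2 * ((N : ℝ) + 1) / B ^ (i - 1) := by
        refine sum_Icc_le_of_le_pow_of_le_div_pow N hi hB hx.le (fun b => ?_) (fun b => ?_)
        · exact_mod_cast min_le_right _ _
        · calc ((min (N / b ^ i) (b ^ (i + r)) : ℕ) : ℝ) ≤ ((N / b ^ i : ℕ) : ℝ) := by
                exact_mod_cast min_le_left _ _
            _ ≤ (N : ℝ) / (b : ℝ) ^ i := by exact_mod_cast Nat.cast_div_le
            _ ≤ ((N : ℝ) + 1) / (b : ℝ) ^ i := by gcongr; linarith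
    _ = 3 * ((N : ℝ) + 1) ^ (((i : ℝ) + r + 1) / k) := by
        rw [mul_div_assoc, hlower, hupper]
        ring
    _ ≤ 4 * ((N : ℝ) + 1) ^ (((i : ℝ) + r + 1) / k) := by
        gcongr
        norm_num

theorem stmt_6 (k i r N : ℕ) (hk : 4 ≤ k) (hr : r = 0 ∨ r = 1) (hi : 2 ≤ i)
    (hkir : k = 2 * i + r) (hN : 1 ≤ N) :
    ({n : ℕ | n ≤ N ∧ ∃ b : ℕ, IsKPalin b k n}.ncard : ℝ) ≤
      4 * ((N : ℝ) + 1) ^ (((i : ℝ) + r + 1) / k) :=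
  stmt_6_general k i r N hi hkir
end

section
/- For every u ≥ 1, the number n := 2^{2u+1} satisfies μ₂(n) ≥ u: for each pair (v,w) with v < w, v + w = 2u+1, and 2^v < 2^w - 1, n is 2-palindromic in base 2^w - 1 with both digits equal to 2^v. -/
lemma Nat.digits_mul_add_one {a b : ℕ} (ha : 0 < a) (hab : a < b) :
    Nat.digits b (a * (b + 1)) = [a, a] := by
  rw [show a * (b + 1) = a + b * a by ring,
    Nat.digits_add b (by omega) a a hab (Or.inl ha.ne'), Nat.digits_of_lt b a ha.ne' hab]

lemma isKPalin_two_of_digits_eq {a b n : ℕ} (hb : 2 ≤ b) (h : Nat.digits b n = [a, a]) :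
    IsKPalin b 2 n :=
  ⟨hb, by rw [h]; rfl, by rw [h]; exact List.Palindrome.of_reverse_eq rfl⟩

lemma IsKPalin.base_le {b k n : ℕ} (h : IsKPalin b k n) (hk : 2 ≤ k) : b ≤ n := by
  obtain ⟨hb, hlen, -⟩ := h
  have : 1 < (Nat.digits b n).length := by omega
  simpa using (Nat.lt_digits_length_iff hb n).1 this

lemma Nat.digits_two_pow_add {v w : ℕ} (hvw : 2 ^ v < 2 ^ w - 1) :
    Nat.digits (2 ^ w - 1) (2 ^ (v + w)) = [2 ^ v, 2 ^ v] := by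
  have hw : 2 ^ w - 1 + 1 = 2 ^ w := Nat.sub_add_cancel Nat.one_le_two_pow
  rw [pow_add, ← hw]
  exact Nat.digits_mul_add_one (by positivity) hvw

lemma two_pow_lt_two_pow_sub_one {v w : ℕ} (hv : 1 ≤ v) (hvw : v < w) :
    2 ^ v < 2 ^ w - 1 := by
  have h2 : 2 ≤ 2 ^ v := by simpa using Nat.pow_le_pow_right two_pos hv
  have hle : 2 ^ (v + 1) ≤ 2 ^ w := Nat.pow_le_pow_right two_pos hvw
  rw [pow_succ] at hle
  omega

lemma two_pow_sub_one_injective : Function.Injective fun w : ℕ => 2 ^ w - 1 := by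
  intro a b hab
  have := @Nat.one_le_two_pow a
  have := @Nat.one_le_two_pow b
  exact Nat.pow_right_injective le_rfl (show 2 ^ a = 2 ^ b by simp only at hab; omega)

lemma isKPalin_two_pow_add {v w : ℕ} (hvw : 2 ^ v < 2 ^ w - 1) :
    IsKPalin (2 ^ w - 1) 2 (2 ^ (v + w)) :=
  isKPalin_two_of_digits_eq (by have := @Nat.one_le_two_pow v; omega) (Nat.digits_two_pow_add hvw)

theorem stmt_11_general (u : ℕ) :
    (∀ v w : ℕ, v < w → v + w = 2 * u + 1 → 2 ^ v < 2 ^ w - 1 →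
      Nat.digits (2 ^ w - 1) (2 ^ (2 * u + 1)) = [2 ^ v, 2 ^ v] ∧
      IsKPalin (2 ^ w - 1) 2 (2 ^ (2 * u + 1))) ∧
    u ≤ {b : ℕ | IsKPalin b 2 (2 ^ (2 * u + 1))}.ncard := by
  refine ⟨fun v w _ hsum hvw =>
    hsum ▸ ⟨Nat.digits_two_pow_add hvw, isKPalin_two_pow_add hvw⟩, ?_⟩
  have hfinite : {b : ℕ | IsKPalin b 2 (2 ^ (2 * u + 1))}.Finite :=
    (Set.finite_Iic _).subset fun b hb => IsKPalin.base_le hb le_rfl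
  have hmaps : ∀ w ∈ Set.Ioc u (2 * u), IsKPalin (2 ^ w - 1) 2 (2 ^ (2 * u + 1)) :=
    fun w ⟨huw, hw⟩ => by
      have hsum : 2 * u + 1 - w + w = 2 * u + 1 := by omega
      exact hsum ▸ isKPalin_two_pow_add (two_pow_lt_two_pow_sub_one (by omega) (by omega))
  calc u = (Set.Ioc u (2 * u)).ncard := by rw [Set.ncard_Ioc_nat]; omega
    _ ≤ _ := Set.ncard_le_ncard_of_injOn _ hmaps two_pow_sub_one_injective.injOn hfinite

theorem stmt_11 (u : ℕ) (hu : 1 ≤ u) :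
    (∀ v w : ℕ, v < w → v + w = 2 * u + 1 → 2 ^ v < 2 ^ w - 1 →
      Nat.digits (2 ^ w - 1) (2 ^ (2 * u + 1)) = [2 ^ v, 2 ^ v] ∧
      IsKPalin (2 ^ w - 1) 2 (2 ^ (2 * u + 1))) ∧
    u ≤ {b : ℕ | IsKPalin b 2 (2 ^ (2 * u + 1))}.ncard :=
  stmt_11_general u
end

section
/- There exist infinitely many natural numbers n such that μ₃(n) ≥ (1/7)·log(n+1), where μ₃(n) is the number of bases b ≥ 2 in which n is 3-palindromic. -/
/-! For `i ∈ [2k+1, 3k]` the base `b = 2^i - 1` satisfies `(b + 1)^2 = 4^i`, so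
`64^k = e (b + 1)^2 = e b^2 + 2e b + e` with `e = 4^(3k-i)`, and the lower bound on `i` makes
`2e < b`, so this is a 3-digit palindrome in base `b`. Hence `μ₃(64^k) ≥ k`, while
`log (64^k + 1) ≤ log (128^k) = 7k log 2 < 7k`. -/

def IsPalin3 (b n : ℕ) : Prop :=
  2 ≤ b ∧ ∃ e f : ℕ, 0 < e ∧ e < b ∧ f < b ∧ n = e * b ^ 2 + f * b + e

noncomputable def mu3 (n : ℕ) : ℕ := {b : ℕ | IsPalin3 b n}.ncard

lemma setOf_isPalin3_finite (n : ℕ) : {b : ℕ | IsPalin3 b n}.Finite := by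
  refine (Set.finite_Iic n).subset ?_
  rintro b ⟨hb, e, f, he, -, -, rfl⟩
  have : b ≤ e * b ^ 2 := by nlinarith
  exact Set.mem_Iic.mpr (by omega)

lemma isPalin3_mul_add_one_sq {b e : ℕ} (he : 0 < e) (heb : 2 * e < b) :
    IsPalin3 b (e * (b + 1) ^ 2) :=
  ⟨by omega, e, 2 * e, he, by omega, heb, by ring⟩

lemma isPalin3_two_pow_sub_one_four_pow {i j : ℕ} (hi : 2 * j + 2 ≤ 3 * i) (hij : i ≤ j) :
    IsPalin3 (2 ^ i - 1) (4 ^ j) := by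
  have hb : 2 ^ i - 1 + 1 = 2 ^ i := Nat.sub_add_cancel Nat.one_le_two_pow
  have hn : 4 ^ j = 4 ^ (j - i) * (2 ^ i - 1 + 1) ^ 2 := by
    rw [hb, ← pow_mul, mul_comm i, pow_mul, show (2 : ℕ) ^ 2 = 4 by rfl, ← pow_add,
      Nat.sub_add_cancel hij]
  have he : 4 * 4 ^ (j - i) ≤ 2 ^ i := by
    rw [← pow_succ', show (4 : ℕ) = 2 ^ 2 by rfl, ← pow_mul]
    exact Nat.pow_le_pow_right two_pos (by omega)
  have he_pos : 0 < 4 ^ (j - i) := by positivity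
  rw [hn]
  exact isPalin3_mul_add_one_sq he_pos (by omega)

lemma le_mu3_sixtyFour_pow (k : ℕ) : k ≤ mu3 (64 ^ k) := by
  have hinj : Function.Injective (fun i : ℕ => 2 ^ i - 1) := fun a b h => by
    have := @Nat.one_le_two_pow a; have := @Nat.one_le_two_pow b
    exact Nat.pow_right_injective le_rfl (show 2 ^ a = 2 ^ b by simp only at h; omega)
  have hsub : (fun i : ℕ => 2 ^ i - 1) '' Set.Icc (2 * k + 1) (3 * k) ⊆
      {b : ℕ | IsPalin3 b (64 ^ k)} := by
    rintro _ ⟨i, ⟨hi, hik⟩, rfl⟩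
    have : 64 ^ k = 4 ^ (3 * k) := by rw [pow_mul]; norm_num
    rw [Set.mem_ofPred_eq, this]
    exact isPalin3_two_pow_sub_one_four_pow (by omega) hik
  calc k = ((fun i : ℕ => 2 ^ i - 1) '' Set.Icc (2 * k + 1) (3 * k)).ncard := by
        rw [Set.ncard_image_of_injective _ hinj, Set.ncard_Icc_nat]; omega
    _ ≤ mu3 (64 ^ k) := Set.ncard_le_ncard hsub (setOf_isPalin3_finite _)

lemma log_sixtyFour_pow_add_one_le {k : ℕ} (hk : 1 ≤ k) :
    Real.log ((64 : ℝ) ^ k + 1) ≤ 7 * k := by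
  have h128 : (64 : ℝ) ^ k + 1 ≤ (2 ^ 7) ^ k := by
    have h1 : (1 : ℝ) ≤ 64 ^ k := one_le_pow₀ (by norm_num)
    have h2 : (2 : ℝ) ≤ 2 ^ k := by simpa using pow_le_pow_right₀ (by norm_num : (1 : ℝ) ≤ 2) hk
    calc (64 : ℝ) ^ k + 1 ≤ 2 * 64 ^ k := by linarith
      _ ≤ 2 ^ k * 64 ^ k := by gcongr
      _ = (2 ^ 7) ^ k := by rw [← mul_pow]; norm_num
  have hlog2 : Real.log 2 ≤ 1 := by linarith [Real.log_le_sub_one_of_pos (two_pos : (0 : ℝ) < 2)]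
  calc Real.log ((64 : ℝ) ^ k + 1) ≤ Real.log ((2 ^ 7) ^ k) := Real.log_le_log (by positivity) h128
    _ = 7 * k * Real.log 2 := by rw [← pow_mul, Real.log_pow]; push_cast; ring
    _ ≤ 7 * k := by nlinarith [(Nat.cast_nonneg k : (0 : ℝ) ≤ k)]

theorem stmt_12 : {n : ℕ | (1 / 7 : ℝ) * Real.log (n + 1) ≤ mu3 n}.Infinite := by
  refine Set.infinite_of_injective_forall_mem (f := fun k : ℕ => 64 ^ (k + 1))
    (fun a b h => by simpa using Nat.pow_right_injective (by norm_num : 2 ≤ 64) h) fun k => ?_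
  have hlog := log_sixtyFour_pow_add_one_le (Nat.le_add_left 1 k)
  have hmu : ((k + 1 : ℕ) : ℝ) ≤ mu3 (64 ^ (k + 1)) := by exact_mod_cast le_mu3_sixtyFour_pow _
  simp only [Set.mem_ofPred_eq, Nat.cast_pow, Nat.cast_ofNat]
  linarith
end
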